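/- arXiv:1803.05890 — 4 statements merged into one kernel-verified Lean document; each statement's English description precedes it below -/
import Mathlib

section
/- Fix T > 0, θ ≥ 0, D > 0, γ > 0 and t₀ ∈ (0, T]. If C > (T^θ / (D γ t₀))^{1/γ}, then there is no continuous nonnegative function h : [0, T] → ℝ satisfying h(t) ≥ C + D ∫₀ᵗ h(s)^{1+γ} (t−s)^{−θ} ds for all t ∈ (0, t₀]. (This is the precise form of the paper's Proposition: for any t₀ ∈ (0, T] there is a constant C₀ = (T^θ/(Dγt₀))^{1/γ} such that for C > C₀ every nonnegative solution of the renewal inequality must blow up by time t₀.) -/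
open MeasureTheory Set

/-- Proposition 2.7 of the paper.
Fix `T > 0`, `θ ≥ 0`, `D > 0`, `γ > 0` and `t₀ ∈ (0, T]`.  If
`C > (T^θ / (D γ t₀))^(1/γ)`, then there is no continuous nonnegative function
`h : [0, T] → ℝ` satisfying the renewal inequality
`h t ≥ C + D ∫₀ᵗ h(s)^(1+γ) (t-s)^(-θ) ds` for all `t ∈ (0, t₀]`,
where the integral is the Lebesgue integral of the nonnegative integrand over `(0, t)`. -/
theorem no_solution_renewal_inequality_large_C
    (T θ D γ t₀ C : ℝ) (hT : 0 < T) (hθ : 0 ≤ θ) (hD : 0 < D) (hγ : 0 < γ)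
    (ht₀ : t₀ ∈ Set.Ioc 0 T)
    (hC : (T ^ θ / (D * γ * t₀)) ^ (1 / γ) < C) :
    ¬ ∃ h : ℝ → ℝ,
      ContinuousOn h (Set.Icc 0 T) ∧
      (∀ t ∈ Set.Icc 0 T, 0 ≤ h t) ∧
      (∀ t ∈ Set.Ioc 0 t₀,
        ENNReal.ofReal C
          + ENNReal.ofReal D *
            ∫⁻ s in Set.Ioo 0 t, ENNReal.ofReal (h s ^ (1 + γ) * (t - s) ^ (-θ))
          ≤ ENNReal.ofReal (h t)) := by
  rintro ⟨h, hcont, hnn, hineq⟩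
  obtain ⟨ht₀0, ht₀T⟩ := ht₀
  have hA : 0 < T ^ θ / (D * γ * t₀) := by positivity
  have hC0 : 0 < C := lt_trans (Real.rpow_pos_of_pos hA _) hC
  -- clamped version of h
  set proj : ℝ → ℝ := fun s => max 0 (min s T) with hprojdef
  have hprojmem : ∀ s, proj s ∈ Icc 0 T := fun s =>
    ⟨le_max_left _ _, max_le hT.le (min_le_right _ _)⟩
  have hprojcont : Continuous proj :=
    continuous_const.max (continuous_id.min continuous_const)
  have hprojeq : ∀ s ∈ Icc 0 T, proj s = s := by
    rintro s ⟨hs0, hsT⟩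
    simp [hprojdef, min_eq_left hsT, max_eq_right hs0]
  set k : ℝ → ℝ := fun s => h (proj s) with hkdef
  have hkcont : Continuous k := hcont.comp_continuous hprojcont hprojmem
  have hk0 : ∀ s, 0 ≤ k s := fun s => hnn _ (hprojmem s)
  have hkeq : ∀ s ∈ Icc 0 T, k s = h s := fun s hs => by
    simp [hkdef, hprojeq s hs]
  set H : ℝ → ℝ := fun s => k s ^ (1 + γ) with hHdef
  have hHcont : Continuous H :=
    hkcont.rpow_const (fun x => Or.inr (by positivity))
  have hH0 : ∀ s, 0 ≤ H s := fun s => Real.rpow_nonneg (hk0 s) _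
  set F : ℝ → ℝ := fun t => ∫ s in (0:ℝ)..t, H s with hFdef
  have hFderiv : ∀ t : ℝ, HasDerivAt F (H t) t := fun t =>
    intervalIntegral.integral_hasDerivAt_right (hHcont.intervalIntegrable _ _)
      hHcont.aestronglyMeasurable.stronglyMeasurableAtFilter hHcont.continuousAt
  have hF0 : ∀ t, 0 ≤ t → 0 ≤ F t := fun t ht =>
    intervalIntegral.integral_nonneg ht (fun s _ => hH0 s)
  set CT : ℝ := T ^ (-θ) with hCTdef
  have hCT : 0 < CT := Real.rpow_pos_of_pos hT _
  set g : ℝ → ℝ := fun t => C + D * CT * F t with hgdef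
  have hg0 : ∀ t, 0 ≤ t → 0 < g t := by
    intro t ht
    have h1 := hF0 t ht
    have h2 : 0 ≤ D * CT * F t := by positivity
    simp only [hgdef]; linarith
  have hgderiv : ∀ t : ℝ, HasDerivAt g (D * CT * H t) t := fun t =>
    ((hFderiv t).const_mul (D * CT)).const_add C
  -- key comparison: h t ≥ g t on (0, t₀]
  have key : ∀ t ∈ Ioc 0 t₀, g t ≤ h t := by
    rintro t ⟨ht0, htt₀⟩
    have htT : t ≤ T := le_trans htt₀ ht₀T
    have hsub : Ioo (0:ℝ) t ⊆ Icc 0 T := fun s hs => ⟨hs.1.le, le_trans hs.2.le htT⟩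
    have hpt : ∀ s ∈ Ioo (0:ℝ) t,
        ENNReal.ofReal (CT * H s) ≤ ENNReal.ofReal (h s ^ (1 + γ) * (t - s) ^ (-θ)) := by
      rintro s hs
      have hsIcc := hsub hs
      have hts0 : 0 < t - s := sub_pos.2 hs.2
      have htsT : t - s ≤ T := by
        have := hs.1; linarith
      have hk1 : CT ≤ (t - s) ^ (-θ) := by
        rw [hCTdef, Real.rpow_neg hT.le, Real.rpow_neg hts0.le]
        exact inv_anti₀ (Real.rpow_pos_of_pos hts0 _)
          (Real.rpow_le_rpow hts0.le htsT hθ)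
      have hks : k s = h s := hkeq s hsIcc
      have hmul : CT * H s ≤ h s ^ (1 + γ) * (t - s) ^ (-θ) := by
        rw [hHdef]; dsimp only; rw [hks, mul_comm]
        exact mul_le_mul_of_nonneg_left hk1 (Real.rpow_nonneg (hnn s hsIcc) _)
      exact ENNReal.ofReal_le_ofReal hmul
    have hmono : ∫⁻ s in Ioo 0 t, ENNReal.ofReal (CT * H s)
        ≤ ∫⁻ s in Ioo 0 t, ENNReal.ofReal (h s ^ (1 + γ) * (t - s) ^ (-θ)) := by
      refine lintegral_mono_ae ?_
      rw [ae_restrict_iff' measurableSet_Ioo]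
      exact Filter.Eventually.of_forall hpt
    have hint : IntegrableOn (fun s => CT * H s) (Ioo 0 t) volume :=
      ((continuous_const.mul hHcont :  Continuous fun s => CT * H s).integrableOn_Ioc).mono_set Ioo_subset_Ioc_self
    have heq : ∫⁻ s in Ioo 0 t, ENNReal.ofReal (CT * H s)
        = ENNReal.ofReal (∫ s in Ioo 0 t, CT * H s) :=
      (MeasureTheory.ofReal_integral_eq_lintegral_ofReal hint
        (Filter.Eventually.of_forall fun s => by
          have := hH0 s; positivity)).symm
    have hval : ∫ s in Ioo 0 t, CT * H s = CT * F t := by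
      rw [MeasureTheory.integral_const_mul]
      congr 1
      show ∫ a in Ioo 0 t, H a = ∫ s in (0:ℝ)..t, H s
      rw [intervalIntegral.integral_of_le ht0.le, integral_Ioc_eq_integral_Ioo]
    have hchain : ENNReal.ofReal C + ENNReal.ofReal D * ENNReal.ofReal (CT * F t)
        ≤ ENNReal.ofReal (h t) := by
      refine le_trans ?_ (hineq t ⟨ht0, htt₀⟩)
      gcongr
      calc ENNReal.ofReal (CT * F t)
          = ∫⁻ s in Ioo 0 t, ENNReal.ofReal (CT * H s) := by rw [heq, hval]
        _ ≤ _ := hmono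
    have hfin : C + D * (CT * F t) ≤ h t := by
      rw [← ENNReal.ofReal_mul hD.le,
        ← ENNReal.ofReal_add hC0.le (by
          have := hF0 t ht0.le; positivity)] at hchain
      exact (ENNReal.ofReal_le_ofReal_iff (hnn t ⟨ht0.le, htT⟩)).1 hchain
    simp only [hgdef]; linarith [hfin]
  -- the comparison function φ
  set φ : ℝ → ℝ := fun t => g t ^ (-γ) + γ * D * CT * t with hφdef
  have hφderiv : ∀ t : ℝ, 0 ≤ t →
      HasDerivAt φ (D * CT * H t * (-γ) * g t ^ (-γ - 1) + γ * D * CT * 1) t := by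
    intro t ht
    exact ((hgderiv t).rpow_const (Or.inl (hg0 t ht).ne')).add
      ((hasDerivAt_id t).const_mul (γ * D * CT))
  have hanti : AntitoneOn φ (Icc 0 t₀) := by
    refine antitoneOn_of_deriv_nonpos (convex_Icc _ _)
      (fun t ht => (hφderiv t ht.1).continuousAt.continuousWithinAt)
      (fun t ht => by
        rw [interior_Icc] at ht
        exact (hφderiv t ht.1.le).differentiableAt.differentiableWithinAt)
      (fun t ht => ?_)
    rw [interior_Icc] at ht
    rw [(hφderiv t ht.1.le).deriv]
    have htIoc : t ∈ Ioc 0 t₀ := ⟨ht.1, ht.2.le⟩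
    have htIcc : t ∈ Icc 0 T := ⟨ht.1.le, le_trans ht.2.le ht₀T⟩
    have hgt : 0 < g t := hg0 t ht.1.le
    have hHge : g t ^ (1 + γ) ≤ H t := by
      rw [hHdef]; dsimp only; rw [hkeq t htIcc]
      exact Real.rpow_le_rpow hgt.le (key t htIoc) (by positivity)
    have hP : 0 < g t ^ (-γ - 1) := Real.rpow_pos_of_pos hgt _
    have hprod : (1:ℝ) ≤ H t * g t ^ (-γ - 1) := by
      have : g t ^ (1 + γ) * g t ^ (-γ - 1) = 1 := by
        have he : (1 + γ) + (-γ - 1) = 0 := by ring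
        rw [← Real.rpow_add hgt, he, Real.rpow_zero]
      calc (1:ℝ) = g t ^ (1 + γ) * g t ^ (-γ - 1) := this.symm
        _ ≤ H t * g t ^ (-γ - 1) := mul_le_mul_of_nonneg_right hHge hP.le
    nlinarith [mul_le_mul_of_nonneg_left hprod (by positivity : (0:ℝ) ≤ γ * D * CT)]
  have hle : φ t₀ ≤ φ 0 :=
    hanti (left_mem_Icc.2 ht₀0.le) (right_mem_Icc.2 ht₀0.le) ht₀0.le
  have hF00 : F 0 = 0 := by simp [hFdef]
  have hg00 : g 0 = C := by simp [hgdef, hF00]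
  have hgt₀ : 0 < g t₀ ^ (-γ) := Real.rpow_pos_of_pos (hg0 t₀ ht₀0.le) _
  have h1 : γ * D * CT * t₀ < C ^ (-γ) := by
    have hle' : g t₀ ^ (-γ) + γ * D * CT * t₀ ≤ C ^ (-γ) + γ * D * CT * 0 := by
      simpa [hφdef, hg00] using hle
    linarith
  have h2 : C ^ (-γ) < γ * D * CT * t₀ := by
    have hlt : T ^ θ / (D * γ * t₀) < C ^ γ := by
      have hpow := Real.rpow_lt_rpow (Real.rpow_nonneg hA.le _) hC hγ
      rwa [← Real.rpow_mul hA.le, one_div, inv_mul_cancel₀ hγ.ne', Real.rpow_one] at hpow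
    have h3 : (C ^ γ)⁻¹ < (T ^ θ / (D * γ * t₀))⁻¹ :=
      inv_strictAnti₀ hA hlt
    rw [Real.rpow_neg hC0.le]
    calc (C ^ γ)⁻¹ < (T ^ θ / (D * γ * t₀))⁻¹ := h3
      _ = γ * D * CT * t₀ := by
          rw [hCTdef, Real.rpow_neg hT.le, inv_div, div_eq_mul_inv]
          ring
  linarith
end

section
/- Let θ > 0, γ > 0 satisfy (1+γ)θ < 1, and let C, D > 0. Then there is no continuous nonnegative function h : [0, ∞) → ℝ satisfying h(t) ≥ C + D ∫₀ᵗ h(s)^{1+γ} (t−s)^{−θ} ds for all t > 0. (Equivalently, for any C > 0 every nonnegative solution of this renewal inequality blows up in finite time.) -/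
open MeasureTheory Set

/-!
A supersolution is at least `C`. If it is at least `m` on `(T, ∞)`, then bounding the kernel
from below by `δ^(-θ)` on the window `(t - δ, t)` gives `h t ≥ D m^(1+γ) δ^(1-θ)`, which equals
`2 m` for `δ = (2 m^(-γ) / D)^(1/(1-θ))`. Along the levels `m = C 2^k` these waiting times
decrease geometrically (ratio `2^(-γ/(1-θ)) < 1`), so their total is finite, and at any later
time `h` would exceed every `C 2^k`.
-/

def IsRenewalSupersolution (θ q C D : ℝ) (h : ℝ → ℝ) : Prop :=
  ∀ t : ℝ, 0 < t →
    ENNReal.ofReal C + ENNReal.ofReal D *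
        ∫⁻ s in Ioo 0 t, ENNReal.ofReal (h s ^ q * (t - s) ^ (-θ))
      ≤ ENNReal.ofReal (h t)

theorem ofReal_mul_rpow_le_setLIntegral_Ioo {h : ℝ → ℝ} {θ q m δ t : ℝ} (hθ : 0 ≤ θ)
    (hq : 0 ≤ q) (hm : 0 ≤ m) (hδ : 0 < δ) (hδt : δ ≤ t)
    (hmh : ∀ s ∈ Ioo (t - δ) t, m ≤ h s) :
    ENNReal.ofReal (m ^ q * δ ^ (1 - θ))
      ≤ ∫⁻ s in Ioo 0 t, ENNReal.ofReal (h s ^ q * (t - s) ^ (-θ)) := by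
  have hδθ : δ ^ (1 - θ) = δ ^ (-θ) * δ := by
    rw [sub_eq_neg_add, Real.rpow_add hδ, Real.rpow_one]
  calc ENNReal.ofReal (m ^ q * δ ^ (1 - θ))
      = ∫⁻ _ in Ioo (t - δ) t, ENNReal.ofReal (m ^ q * δ ^ (-θ)) := by
        rw [setLIntegral_const, Real.volume_Ioo, sub_sub_cancel, ← ENNReal.ofReal_mul
          (by positivity), hδθ, mul_assoc]
    _ ≤ ∫⁻ s in Ioo (t - δ) t, ENNReal.ofReal (h s ^ q * (t - s) ^ (-θ)) := by
        refine setLIntegral_mono' measurableSet_Ioo fun s hs => ENNReal.ofReal_le_ofReal ?_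
        have hmh_s := hmh s hs
        have hkernel : δ ^ (-θ) ≤ (t - s) ^ (-θ) :=
          Real.rpow_le_rpow_of_nonpos (sub_pos.2 hs.2) (by linarith [hs.1]) (neg_nonpos.2 hθ)
        exact mul_le_mul (Real.rpow_le_rpow hm hmh_s hq) hkernel (by positivity)
          (Real.rpow_nonneg (hm.trans hmh_s) q)
    _ ≤ ∫⁻ s in Ioo 0 t, ENNReal.ofReal (h s ^ q * (t - s) ^ (-θ)) :=
        lintegral_mono_set (Ioo_subset_Ioo_left (sub_nonneg.2 hδt))

namespace IsRenewalSupersolution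

variable {θ q C D : ℝ} {h : ℝ → ℝ}

theorem le_apply (hh : IsRenewalSupersolution θ q C D h) (hC : 0 < C) {t : ℝ} (ht : 0 < t) :
    C ≤ h t :=
  (ENNReal.ofReal_le_ofReal_iff'.1 (le_self_add.trans (hh t ht))).resolve_right hC.not_ge

theorem mul_rpow_le (hh : IsRenewalSupersolution θ q C D h) (hθ : 0 ≤ θ) (hq : 0 ≤ q)
    (hD : 0 < D) {m δ T : ℝ} (hm : 0 < m) (hδ : 0 < δ) (hT : 0 ≤ T)
    (hmh : ∀ s, T < s → m ≤ h s) {t : ℝ} (ht : T + δ < t) :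
    D * (m ^ q * δ ^ (1 - θ)) ≤ h t := by
  have hwindow := ofReal_mul_rpow_le_setLIntegral_Ioo (h := h) hθ hq hm.le hδ (by linarith)
    fun s hs => hmh s (by linarith [hs.1])
  have hlow : ENNReal.ofReal (D * (m ^ q * δ ^ (1 - θ))) ≤ ENNReal.ofReal (h t) := by
    rw [ENNReal.ofReal_mul hD.le]
    exact (mul_le_mul_right hwindow _).trans (le_add_self.trans (hh t (by linarith)))
  exact (ENNReal.ofReal_le_ofReal_iff'.1 hlow).resolve_right
    (mul_pos hD (mul_pos (Real.rpow_pos_of_pos hm q) (Real.rpow_pos_of_pos hδ _))).not_ge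

theorem two_mul_le {γ : ℝ} (hh : IsRenewalSupersolution θ (1 + γ) C D h) (hθ : 0 ≤ θ)
    (hθ1 : θ < 1) (hγ : 0 ≤ 1 + γ) (hD : 0 < D) {m T : ℝ} (hm : 0 < m) (hT : 0 ≤ T)
    (hmh : ∀ s, T < s → m ≤ h s) {t : ℝ} (ht : T + (2 / D * m ^ (-γ)) ^ (1 - θ)⁻¹ < t) :
    2 * m ≤ h t := by
  have hdouble : D * (m ^ (1 + γ) * ((2 / D * m ^ (-γ)) ^ (1 - θ)⁻¹) ^ (1 - θ)) = 2 * m := by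
    rw [Real.rpow_inv_rpow (by positivity) (sub_pos.2 hθ1).ne', Real.rpow_add hm, Real.rpow_one,
      Real.rpow_neg hm.le]
    field_simp
  simpa only [hdouble] using hh.mul_rpow_le hθ hγ hD hm (by positivity) hT hmh ht

end IsRenewalSupersolution

theorem mul_two_pow_rpow_neg_rpow {a C : ℝ} (ha : 0 ≤ a) (hC : 0 < C) (q p : ℝ) (k : ℕ) :
    (a * (C * 2 ^ k) ^ (-q)) ^ p = (a * C ^ (-q)) ^ p * ((2 : ℝ) ^ (-q * p)) ^ k := by
  rw [Real.mul_rpow hC.le (by positivity), ← mul_assoc,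
    Real.mul_rpow (by positivity) (by positivity), ← Real.rpow_pow_comm zero_le_two (-q) k,
    ← Real.rpow_pow_comm (by positivity) p k, ← Real.rpow_mul zero_le_two]

theorem two_pow_le_of_doubling {h : ℝ → ℝ} {C K ρ : ℝ} (hK : 0 ≤ K) (hρ0 : 0 ≤ ρ) (hρ1 : ρ < 1)
    (hbase : ∀ t, 0 < t → C ≤ h t)
    (hstep : ∀ k : ℕ, ∀ T, 0 ≤ T → (∀ s, T < s → C * 2 ^ k ≤ h s) →
      ∀ t, T + K * ρ ^ k < t → C * 2 ^ (k + 1) ≤ h t)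
    (k : ℕ) {t : ℝ} (ht : K / (1 - ρ) < t) : C * 2 ^ k ≤ h t := by
  have hlevel : ∀ k : ℕ, ∀ t, K * ∑ j ∈ Finset.range k, ρ ^ j < t → C * 2 ^ k ≤ h t := by
    intro k
    induction k with
    | zero => simpa using hbase
    | succ k ih =>
      intro t ht
      rw [Finset.sum_range_succ, mul_add] at ht
      exact hstep k _ (by positivity) ih t ht
  have hgeom : ∑ j ∈ Finset.range k, ρ ^ j ≤ 1 / (1 - ρ) := by
    have := geom_sum_Ico_le_of_lt_one (m := 0) (n := k) hρ0 hρ1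
    rwa [← Finset.range_eq_Ico, pow_zero] at this
  refine hlevel k t (lt_of_le_of_lt ?_ ht)
  simpa only [mul_one_div] using mul_le_mul_of_nonneg_left hgeom hK

/-- Proposition 2.8 of the paper.
Let `θ > 0`, `γ > 0` satisfy `(1+γ)θ < 1`, and let `C, D > 0`.  Then there is no
continuous nonnegative function `h : [0, ∞) → ℝ` satisfying the renewal inequality
`h t ≥ C + D ∫₀ᵗ h(s)^(1+γ) (t-s)^(-θ) ds` for all `t > 0`, where the integral is
the Lebesgue integral of the nonnegative integrand over `(0, t)`. -/
theorem no_global_solution_renewal_inequality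
    (θ γ C D : ℝ) (hθ : 0 < θ) (hγ : 0 < γ) (hsub : (1 + γ) * θ < 1)
    (hC : 0 < C) (hD : 0 < D) :
    ¬ ∃ h : ℝ → ℝ,
      ContinuousOn h (Set.Ici 0) ∧
      (∀ t ∈ Set.Ici (0 : ℝ), 0 ≤ h t) ∧
      (∀ t : ℝ, 0 < t →
        ENNReal.ofReal C
          + ENNReal.ofReal D *
            ∫⁻ s in Set.Ioo 0 t, ENNReal.ofReal (h s ^ (1 + γ) * (t - s) ^ (-θ))
          ≤ ENNReal.ofReal (h t)) := by
  rintro ⟨h, -, -, hh⟩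
  have hθ1 : θ < 1 := by nlinarith
  set p := (1 - θ)⁻¹
  have hp : 0 < p := inv_pos.2 (sub_pos.2 hθ1)
  set K := (2 / D * C ^ (-γ)) ^ p
  set ρ := (2 : ℝ) ^ (-γ * p)
  have hρ1 : ρ < 1 := Real.rpow_lt_one_of_one_lt_of_neg one_lt_two (by nlinarith)
  have hlevels (k : ℕ) : C * 2 ^ k ≤ h (K / (1 - ρ) + 1) := by
    refine two_pow_le_of_doubling (by positivity) (by positivity) hρ1
      (fun t ht => IsRenewalSupersolution.le_apply hh hC ht) (fun k T hT hTh t ht => ?_) k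
      (lt_add_one _)
    rw [← mul_two_pow_rpow_neg_rpow (by positivity) hC] at ht
    calc C * 2 ^ (k + 1) = 2 * (C * 2 ^ k) := by ring
      _ ≤ h t := IsRenewalSupersolution.two_mul_le hh hθ.le hθ1 (by linarith) hD
          (by positivity) hT hTh ht
  obtain ⟨k, hk⟩ := pow_unbounded_of_one_lt (h (K / (1 - ρ) + 1) / C) one_lt_two
  linarith [hlevels k, (div_lt_iff₀ hC).1 hk]
end

section
/- Let η > 0 and β ∈ (0, 1) be such that b := β(1+η) < 1, and let C₃, C₄ > 0. If P : [1, T] → ℝ is continuous, nonnegative and satisfies P(t) ≥ C₃ + C₄ ∫₁ᵗ P(s)^{1+η} s^{−b} ds for all t ∈ [1, T], then T < t₀, where t₀ is defined by t₀^{1−b} = 1 + (1−b) C₃^{−η}/(η C₄). In particular, no continuous nonnegative P can satisfy this inequality on all of [1, ∞). -/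
open MeasureTheory Set intervalIntegral

open Real

/-!
Put `F t = C₃ + C₄ ∫₁ᵗ P(s)^(1+η) s^(-b) ds`. Then `C₃ ≤ F ≤ P`, so `F` satisfies the Bihari-type
differential inequality `F' ≥ C₄ t^(-b) F^(1+η)`. Hence `F^(-η) + η C₄ t^(1-b)/(1-b)` is
nonincreasing, and since `F(T)^(-η) > 0` this gives `η C₄ (T^(1-b) - 1)/(1-b) < C₃^(-η)`,
which is `T < t₀`.
-/

theorem hasDerivAt_integral_of_continuousOn {f : ℝ → ℝ} {a b t : ℝ}
    (hf : ContinuousOn f (Icc a b)) (ht : t ∈ Ioo a b) :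
    HasDerivAt (fun u => ∫ s in a..u, f s) (f t) t :=
  integral_hasDerivAt_right
    ((hf.mono (Icc_subset_Icc_right ht.2.le)).intervalIntegrable_of_Icc ht.1.le)
    ((hf.mono Ioo_subset_Icc_self).stronglyMeasurableAtFilter isOpen_Ioo t ht)
    (hf.continuousAt (Icc_mem_nhds ht.1 ht.2))

theorem antitoneOn_rpow_neg_add_mul_of_le_deriv {F f W w : ℝ → ℝ} {a b η : ℝ} (hη : 0 ≤ η)
    (hF : ContinuousOn F (Icc a b)) (hFpos : ∀ t ∈ Icc a b, 0 < F t)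
    (hW : ContinuousOn W (Icc a b))
    (hF' : ∀ t ∈ Ioo a b, HasDerivAt F (f t) t) (hW' : ∀ t ∈ Ioo a b, HasDerivAt W (w t) t)
    (hfw : ∀ t ∈ Ioo a b, w t * F t ^ (1 + η) ≤ f t) :
    AntitoneOn (fun t => F t ^ (-η) + η * W t) (Icc a b) := by
  refine antitoneOn_of_hasDerivWithinAt_nonpos (convex_Icc a b)
    ((hF.rpow_const fun t ht => Or.inl (hFpos t ht).ne').add (continuousOn_const.mul hW))
    (f' := fun t => f t * -η * F t ^ (-η - 1) + η * w t) ?_ ?_ <;> rw [interior_Icc] <;>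
    intro t ht <;> have hFt := hFpos t (Ioo_subset_Icc_self ht)
  · exact (((hF' t ht).rpow_const (Or.inl hFt.ne')).add
      ((hW' t ht).const_mul η)).hasDerivWithinAt
  · have hwf : w t ≤ F t ^ (-η - 1) * f t := calc
      w t = F t ^ (-η - 1) * (w t * F t ^ (1 + η)) := by
        rw [mul_left_comm, ← rpow_add hFt, show -η - 1 + (1 + η) = 0 by ring, rpow_zero, mul_one]
      _ ≤ F t ^ (-η - 1) * f t := mul_le_mul_of_nonneg_left (hfw t ht) (by positivity)
    nlinarith [mul_le_mul_of_nonneg_left hwf hη]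

theorem mul_sub_lt_rpow_neg_of_le_add_integral {P w W : ℝ → ℝ} {a b C η : ℝ} (hη : 0 ≤ η)
    (hC : 0 < C) (hab : a ≤ b) (hP : ContinuousOn P (Icc a b)) (hP0 : ∀ t ∈ Icc a b, 0 ≤ P t)
    (hw : ContinuousOn w (Icc a b)) (hw0 : ∀ t ∈ Icc a b, 0 ≤ w t)
    (hW : ContinuousOn W (Icc a b)) (hW' : ∀ t ∈ Ioo a b, HasDerivAt W (w t) t)
    (hPC : ∀ t ∈ Icc a b, C + ∫ s in a..t, w s * P s ^ (1 + η) ≤ P t) :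
    η * (W b - W a) < C ^ (-η) := by
  set F := fun t => C + ∫ s in a..t, w s * P s ^ (1 + η)
  have hg : ContinuousOn (fun s => w s * P s ^ (1 + η)) (Icc a b) :=
    hw.mul (hP.rpow_const fun _ _ => Or.inr (by linarith))
  have hFpos : ∀ t ∈ Icc a b, 0 < F t := fun t ht =>
    hC.trans_le <| le_add_of_nonneg_right <| intervalIntegral.integral_nonneg ht.1 fun s hs =>
      have hs : s ∈ Icc a b := ⟨hs.1, hs.2.trans ht.2⟩
      mul_nonneg (hw0 s hs) (rpow_nonneg (hP0 s hs) _)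
  have hF : ContinuousOn F (Icc a b) := continuousOn_const.add <| by
    simpa only [uIcc_of_le hab] using
      continuousOn_primitive_interval (hg.integrableOn_Icc.mono_set (uIcc_of_le hab).subset)
  have hanti := antitoneOn_rpow_neg_add_mul_of_le_deriv hη hF hFpos hW
    (fun t ht => (hasDerivAt_integral_of_continuousOn hg ht).const_add C) hW'
    fun t ht => have ht := Ioo_subset_Icc_self ht
      mul_le_mul_of_nonneg_left (rpow_le_rpow (hFpos t ht).le (hPC t ht) (by linarith)) (hw0 t ht)
  have hFb := rpow_pos_of_pos (hFpos b (right_mem_Icc.2 hab)) (-η)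
  have := hanti (left_mem_Icc.2 hab) (right_mem_Icc.2 hab) hab
  simp only [F, integral_same, add_zero] at this hFb
  linarith

theorem hasDerivAt_rpow_div_self {p t : ℝ} (hp : p ≠ 0) (ht : 0 < t) :
    HasDerivAt (fun x => x ^ p / p) (t ^ (p - 1)) t :=
  ((hasDerivAt_rpow_const (Or.inl ht.ne')).div_const p).congr_deriv (mul_div_cancel_left₀ _ hp)

theorem weighted_renewal_blowup_time_bound_general
    (η β C₃ C₄ T : ℝ) (hη : 0 < η)
    (hb : β * (1 + η) < 1) (hC₃ : 0 < C₃) (hC₄ : 0 < C₄) (hT : 1 ≤ T)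
    (P : ℝ → ℝ)
    (hcont : ContinuousOn P (Set.Icc 1 T))
    (hnn : ∀ t ∈ Set.Icc (1 : ℝ) T, 0 ≤ P t)
    (hineq : ∀ t ∈ Set.Icc (1 : ℝ) T,
      C₃ + C₄ * ∫ s in (1 : ℝ)..t, P s ^ (1 + η) * s ^ (-(β * (1 + η))) ≤ P t) :
    T < (1 + (1 - β * (1 + η)) * C₃ ^ (-η) / (η * C₄)) ^ (1 / (1 - β * (1 + η))) := by
  set b := β * (1 + η)
  have h1b : 0 < 1 - b := by linarith
  have hpos : ∀ t ∈ Icc (1 : ℝ) T, 0 < t := fun t ht => by linarith [ht.1]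
  have key := mul_sub_lt_rpow_neg_of_le_add_integral (w := fun s => C₄ * s ^ (-b))
    (W := fun t => C₄ * (t ^ (1 - b) / (1 - b))) hη.le hC₃ hT hcont hnn
    (continuousOn_const.mul (continuousOn_id.rpow_const fun t ht => Or.inl (hpos t ht).ne'))
    (fun t ht => by have := hpos t ht; positivity)
    (continuousOn_const.mul ((continuousOn_id.rpow_const
      fun t ht => Or.inl (hpos t ht).ne').div_const _))
    (fun t ht => ((hasDerivAt_rpow_div_self h1b.ne' (hpos t (Ioo_subset_Icc_self ht))).const_mul
      C₄).congr_deriv (by rw [sub_sub_cancel_left]))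
    (fun t ht => by
      convert hineq t ht using 2
      rw [← intervalIntegral.integral_const_mul]
      congr 1 with s
      ring)
  have hbase : 0 ≤ 1 + (1 - b) * C₃ ^ (-η) / (η * C₄) := by
    have := rpow_pos_of_pos hC₃ (-η)
    positivity
  rw [one_div, lt_rpow_inv_iff_of_pos (by linarith) hbase h1b, ← sub_lt_iff_lt_add',
    lt_div_iff₀ (by positivity)]
  simp only [one_rpow] at key
  rw [show η * (C₄ * (T ^ (1 - b) / (1 - b)) - C₄ * (1 / (1 - b)))
    = (T ^ (1 - b) - 1) * (η * C₄) / (1 - b) by ring, div_lt_iff₀ h1b] at key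
  linarith

/-- weighted renewal-inequality blow-up, key step of Theorem 1.9.
Let `η > 0`, `β ∈ (0,1)` with `b := β(1+η) < 1`, and `C₃, C₄ > 0`.  If
`P : [1, T] → ℝ` is continuous, nonnegative and satisfies
`P t ≥ C₃ + C₄ ∫₁ᵗ P(s)^(1+η) s^(-b) ds` for all `t ∈ [1, T]`, then `T < t₀`,
where `t₀^(1-b) = 1 + (1-b) C₃^(-η)/(η C₄)`.  In particular, no continuous
nonnegative `P` can satisfy this inequality on all of `[1, ∞)`. -/
theorem weighted_renewal_blowup_time_bound
    (η β C₃ C₄ T : ℝ) (hη : 0 < η) (hβ : β ∈ Set.Ioo (0 : ℝ) 1)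
    (hb : β * (1 + η) < 1) (hC₃ : 0 < C₃) (hC₄ : 0 < C₄) (hT : 1 ≤ T)
    (P : ℝ → ℝ)
    (hcont : ContinuousOn P (Set.Icc 1 T))
    (hnn : ∀ t ∈ Set.Icc (1 : ℝ) T, 0 ≤ P t)
    (hineq : ∀ t ∈ Set.Icc (1 : ℝ) T,
      C₃ + C₄ * ∫ s in (1 : ℝ)..t, P s ^ (1 + η) * s ^ (-(β * (1 + η))) ≤ P t) :
    T < (1 + (1 - β * (1 + η)) * C₃ ^ (-η) / (η * C₄)) ^ (1 / (1 - β * (1 + η))) :=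
  weighted_renewal_blowup_time_bound_general η β C₃ C₄ T hη hb hC₃ hC₄ hT P hcont hnn hineq
end

section
/- Let C, C₁, η, θ > 0. There is no measurable function P : [0, ∞) → [0, ∞) such that both (i) ∫₀^∞ e^{−λt} P(t) dt < ∞ for every λ > 0, and (ii) P(t) ≥ C + C₁ ∫₀ᵗ P(s)^{1+η} (t−s)^θ ds for all t ≥ 0. -/
open MeasureTheory Set

/-!
A real-valued solution of the integral inequality would blow up in finite time. If `P ≥ a` on
`[T, ∞)`, keeping only the window `s ∈ (t - δ, t - δ/2)`, where `(t - s)^θ ≥ (δ/2)^θ`, gives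
`P ≥ C₁ a^(1+η) (δ/2)^(θ+1)` on `[T + δ, ∞)`. Starting from `P ≥ C` and taking the windows
`δ, δ/2, δ/4, …` with `κ^η = 2^(θ+1)` and `δ` large enough, the factor gained at each step is
at least `κ > 1`, so `P ≥ C κⁿ` on `[2δ - 2δ/2ⁿ, ∞)` for every `n`, and `P (2δ)` cannot be finite.
-/

def DominatesPowerConvolution (C₁ p θ : ℝ) (P : ℝ → ℝ) : Prop :=
  ∀ t, 0 ≤ t →
    ENNReal.ofReal C₁ * ∫⁻ s in Ioo 0 t, ENNReal.ofReal (P s ^ p * (t - s) ^ θ)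
      ≤ ENNReal.ofReal (P t)

namespace DominatesPowerConvolution

variable {C₁ p θ : ℝ} {P : ℝ → ℝ}

theorem mul_rpow_mul_half_rpow_le (hP : DominatesPowerConvolution C₁ p θ P) (hp : 0 ≤ p)
    (hθ : 0 ≤ θ) {a T δ : ℝ} (ha : 0 ≤ a) (hT : 0 ≤ T) (hδ : 0 < δ) (h : ∀ t, T ≤ t → a ≤ P t) :
    ∀ t, T + δ ≤ t → C₁ * a ^ p * (δ / 2) ^ (θ + 1) ≤ P t := by
  intro t ht
  have hwindow : ENNReal.ofReal (a ^ p * (δ / 2) ^ θ) * ENNReal.ofReal (δ / 2)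
      ≤ ∫⁻ s in Ioo 0 t, ENNReal.ofReal (P s ^ p * (t - s) ^ θ) :=
    calc ENNReal.ofReal (a ^ p * (δ / 2) ^ θ) * ENNReal.ofReal (δ / 2)
        = ∫⁻ _ in Ioo (t - δ) (t - δ / 2), ENNReal.ofReal (a ^ p * (δ / 2) ^ θ) := by
          rw [setLIntegral_const, Real.volume_Ioo]
          ring_nf
      _ ≤ ∫⁻ s in Ioo (t - δ) (t - δ / 2), ENNReal.ofReal (P s ^ p * (t - s) ^ θ) := by
          refine setLIntegral_mono' measurableSet_Ioo fun s hs ↦ ENNReal.ofReal_le_ofReal ?_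
          have hPs : a ≤ P s := h s (by linarith [hs.1])
          have : δ / 2 ≤ t - s := by linarith [hs.2]
          gcongr
          exact Real.rpow_nonneg (ha.trans hPs) p
      _ ≤ ∫⁻ s in Ioo 0 t, ENNReal.ofReal (P s ^ p * (t - s) ^ θ) :=
          lintegral_mono_set (Ioo_subset_Ioo (by linarith) (by linarith))
  rw [← ENNReal.ofReal_le_ofReal_iff (ha.trans (h t (by linarith)))]
  calc ENNReal.ofReal (C₁ * a ^ p * (δ / 2) ^ (θ + 1))
      = ENNReal.ofReal C₁ * (ENNReal.ofReal (a ^ p * (δ / 2) ^ θ) * ENNReal.ofReal (δ / 2)) := by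
        rw [← ENNReal.ofReal_mul (by positivity), ← ENNReal.ofReal_mul' (by positivity),
          Real.rpow_add_one (by positivity)]
        ring_nf
    _ ≤ ENNReal.ofReal C₁ * ∫⁻ s in Ioo 0 t, ENNReal.ofReal (P s ^ p * (t - s) ^ θ) := by
        gcongr
    _ ≤ ENNReal.ofReal (P t) := hP t (by linarith)

theorem mul_pow_le {η : ℝ} (hP : DominatesPowerConvolution C₁ (1 + η) θ P) (hη : 0 ≤ η)
    (hθ : 0 ≤ θ) {C κ δ : ℝ} (hC : 0 ≤ C) (hκ0 : 0 ≤ κ) (hκ : 2 ^ (θ + 1) ≤ κ ^ η) (hδ : 0 < δ)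
    (hgain : κ ≤ C₁ * C ^ η * (δ / 2) ^ (θ + 1)) (hPC : ∀ t, 0 ≤ t → C ≤ P t) (n : ℕ) :
    ∀ t, 2 * δ - 2 * δ / 2 ^ n ≤ t → C * κ ^ n ≤ P t := by
  induction n with
  | zero => simpa using hPC
  | succ n ih =>
    have hgain_n : κ ≤ C₁ * (C * κ ^ n) ^ η * (δ / 2 ^ n / 2) ^ (θ + 1) :=
      calc κ ≤ C₁ * C ^ η * (δ / 2) ^ (θ + 1) := hgain
        _ ≤ C₁ * C ^ η * (δ / 2) ^ (θ + 1) * ((κ ^ η) ^ n / (2 ^ (θ + 1)) ^ n) :=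
          le_mul_of_one_le_right (hκ0.trans hgain)
            ((one_le_div (by positivity)).2 (pow_le_pow_left₀ (by positivity) hκ n))
        _ = C₁ * (C * κ ^ n) ^ η * (δ / 2 ^ n / 2) ^ (θ + 1) := by
          rw [Real.mul_rpow hC (by positivity), ← Real.rpow_pow_comm hκ0,
            div_right_comm, Real.div_rpow (x := δ / 2) (by positivity) (by positivity),
            ← Real.rpow_pow_comm zero_le_two]
          ring
    have hT : 0 ≤ 2 * δ - 2 * δ / 2 ^ n := by
      have : 2 * δ / 2 ^ n ≤ 2 * δ := div_le_self (by positivity) (one_le_pow₀ one_le_two)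
      linarith
    have hstep := hP.mul_rpow_mul_half_rpow_le (a := C * κ ^ n) (δ := δ / 2 ^ n) (by linarith)
      hθ (by positivity) hT (by positivity) ih
    intro t ht
    have hwindow : 2 * δ - 2 * δ / 2 ^ n + δ / 2 ^ n = 2 * δ - 2 * δ / 2 ^ (n + 1) := by
      rw [pow_succ]
      field_simp
      ring
    calc C * κ ^ (n + 1) = C * κ ^ n * κ := by ring
      _ ≤ C * κ ^ n * (C₁ * (C * κ ^ n) ^ η * (δ / 2 ^ n / 2) ^ (θ + 1)) := by gcongr
      _ = C₁ * (C * κ ^ n) ^ (1 + η) * (δ / 2 ^ n / 2) ^ (θ + 1) := by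
        rw [Real.rpow_one_add' (by positivity) (by positivity)]
        ring
      _ ≤ P t := hstep t (hwindow ▸ ht)

end DominatesPowerConvolution

theorem not_dominatesPowerConvolution_of_forall_le {C₁ η θ C : ℝ} {P : ℝ → ℝ} (hC₁ : 0 < C₁)
    (hη : 0 < η) (hθ : 0 ≤ θ) (hC : 0 < C) (hPC : ∀ t, 0 ≤ t → C ≤ P t) :
    ¬ DominatesPowerConvolution C₁ (1 + η) θ P := by
  intro hP
  set κ : ℝ := 2 ^ ((θ + 1) / η)
  have hκ : κ ^ η = 2 ^ (θ + 1) := by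
    rw [← Real.rpow_mul zero_le_two, div_mul_cancel₀ _ hη.ne']
  have hκ1 : 1 < κ := Real.one_lt_rpow one_lt_two (by positivity)
  set δ : ℝ := 2 * (κ / (C₁ * C ^ η)) ^ (θ + 1)⁻¹
  have hgain : κ ≤ C₁ * C ^ η * (δ / 2) ^ (θ + 1) := by
    rw [mul_div_cancel_left₀ _ two_ne_zero, Real.rpow_inv_rpow (by positivity) (by positivity),
      mul_div_cancel₀ _ (by positivity)]
  obtain ⟨n, hn⟩ := pow_unbounded_of_one_lt (P (2 * δ) / C) hκ1
  have hblow := hP.mul_pow_le hη.le hθ hC.le (by positivity) hκ.ge (by positivity) hgain hPC n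
    (2 * δ) (by linarith [show 0 ≤ 2 * δ / 2 ^ n by positivity])
  rw [div_lt_iff₀ hC] at hn
  linarith

/-- Laplace-transform blow-up argument of Remark 1.2.
Let `C, C₁, η, θ > 0`.  There is no measurable function `P : [0, ∞) → [0, ∞)`
such that both (i) `∫₀^∞ e^(-λt) P(t) dt < ∞` for every `λ > 0`, and
(ii) `P t ≥ C + C₁ ∫₀ᵗ P(s)^(1+η) (t-s)^θ ds` for all `t ≥ 0`. -/
theorem no_laplace_transformable_solution_power_kernel
    (C C₁ η θ : ℝ) (hC : 0 < C) (hC₁ : 0 < C₁) (hη : 0 < η) (hθ : 0 < θ) :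
    ¬ ∃ P : ℝ → ℝ,
      Measurable P ∧ (∀ t, 0 ≤ P t) ∧
      (∀ l : ℝ, 0 < l →
        (∫⁻ t in Set.Ioi (0 : ℝ), ENNReal.ofReal (Real.exp (-l * t) * P t)) < ⊤) ∧
      (∀ t : ℝ, 0 ≤ t →
        ENNReal.ofReal C
          + ENNReal.ofReal C₁ *
            ∫⁻ s in Set.Ioo 0 t, ENNReal.ofReal (P s ^ (1 + η) * (t - s) ^ θ)
          ≤ ENNReal.ofReal (P t)) := by
  rintro ⟨P, -, hP0, -, hP⟩
  refine not_dominatesPowerConvolution_of_forall_le hC₁ hη hθ.le hC (fun t ht ↦ ?_)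
    (fun t ht ↦ le_add_self.trans (hP t ht))
  exact (ENNReal.ofReal_le_ofReal_iff (hP0 t)).1 (le_self_add.trans (hP t ht))
end
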